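/- arXiv:2006.07503 — 4 statements merged into one kernel-verified Lean document; each statement's English description precedes it below -/
import Mathlib

section
/- Let V be nonempty closed convex, ψ strictly convex and differentiable, and for t = 1,…,T let x_{t+1} = argmin_{x ∈ V} B_ψ(x, x_t) + η_t·ℓ_t(x) with convex losses ℓ_t and η_t > 0. Then for every u ∈ V: ∑_{t=1}^T [ℓ_t(x_{t+1}) − ℓ_t(u)] ≤ ∑_{t=1}^T [B_ψ(u, x_t) − B_ψ(u, x_{t+1})]/η_t − ∑_{t=1}^T B_ψ(x_{t+1}, x_t)/η_t. -/
/-!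
Each step is the first-order optimality condition of the implicit update: since `x_{t+1}` minimises
`B_ψ(·, x_t) + η_t ℓ_t` over the convex set `V`, for every `u ∈ V`
`η_t (ℓ_t(x_{t+1}) - ℓ_t(u)) ≤ ⟪∇ψ(x_{t+1}) - ∇ψ(x_t), u - x_{t+1}⟫`, and the three-point identity
rewrites the right-hand side as `B_ψ(u, x_t) - B_ψ(u, x_{t+1}) - B_ψ(x_{t+1}, x_t)`.
Dividing by `η_t` and summing over `t` gives the claim.
-/

open Finset

/-- The Bregman divergence of `ψ` with gradient `Dψ`. -/
noncomputable def breg {E : Type*} [NormedAddCommGroup E] [InnerProductSpace ℝ E]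
    (ψ : E → ℝ) (Dψ : E → E) (x y : E) : ℝ :=
  ψ x - ψ y - (inner ℝ (Dψ y) (x - y) : ℝ)

open InnerProductSpace

/-- The convex part `g` is only known along the segment `[b, u]`, where it lies below its chord;
replacing it by the chord gives a differentiable function of the segment parameter, minimal at `0`. -/
theorem IsMinOn.sub_le_fderiv_of_add_convexOn {E : Type*} [NormedAddCommGroup E]
    [NormedSpace ℝ E] {V : Set E} {f g : E → ℝ} {f' : E →L[ℝ] ℝ} {b u : E}
    (hmin : IsMinOn (f + g) V b) (hf : HasFDerivAt f f' b) (hg : ConvexOn ℝ V g)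
    (hb : b ∈ V) (hu : u ∈ V) : g b - g u ≤ f' (u - b) := by
  set F : ℝ → ℝ := fun t => f (b + t • (u - b)) + t * (g u - g b)
  have hF : HasDerivAt F (f' (u - b) + (g u - g b)) 0 := by
    have hline : HasDerivAt (fun t : ℝ => b + t • (u - b)) (u - b) 0 := by
      simpa using ((hasDerivAt_id (0 : ℝ)).smul_const (u - b)).const_add b
    have hf0 : HasFDerivAt f f' (b + (0 : ℝ) • (u - b)) := by simpa using hf
    have hchord : HasDerivAt (fun t : ℝ => t * (g u - g b)) (g u - g b) 0 := by
      simpa using (hasDerivAt_id (0 : ℝ)).mul_const (g u - g b)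
    exact (hf0.comp_hasDerivAt 0 hline).add hchord
  have hFmin : IsMinOn F (Set.Icc 0 1) 0 := by
    refine isMinOn_iff.mpr fun t ⟨ht0, ht1⟩ => ?_
    have hseg : b + t • (u - b) = (1 - t) • b + t • u := by module
    have hmem : b + t • (u - b) ∈ V := hseg ▸ hg.1 hb hu (by linarith) ht0 (by ring)
    have hconv : g (b + t • (u - b)) ≤ (1 - t) * g b + t * g u :=
      hseg ▸ hg.2 hb hu (by linarith) ht0 (by ring)
    have hle := isMinOn_iff.mp hmin _ hmem
    simp only [Pi.add_apply, F, zero_smul, add_zero, zero_mul] at hle ⊢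
    linarith
  have hcone : (1 : ℝ) ∈ posTangentConeAt (Set.Icc (0 : ℝ) 1) 0 :=
    mem_posTangentConeAt_of_segment_subset (by simp [segment_eq_Icc])
  have hderiv := hFmin.localize.hasFDerivWithinAt_nonneg hF.hasFDerivAt.hasFDerivWithinAt hcone
  simp only [ContinuousLinearMap.toSpanSingleton_apply, smul_eq_mul, one_mul] at hderiv
  linarith

section Bregman

variable {E : Type*} [NormedAddCommGroup E] [InnerProductSpace ℝ E] {ψ : E → ℝ} {Dψ : E → E}

theorem hasGradientAt_breg_left [CompleteSpace E] {a b : E} (hψ : HasGradientAt ψ (Dψ b) b) :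
    HasGradientAt (fun y => breg ψ Dψ y a) (Dψ b - Dψ a) b := by
  rw [hasGradientAt_iff_hasFDerivAt, map_sub]
  have hlin : HasFDerivAt (fun y => inner ℝ (Dψ a) (y - a)) (toDual ℝ E (Dψ a)) b := by
    simpa only [toDual_apply_apply, inner_sub_right] using
      (toDual ℝ E (Dψ a)).hasFDerivAt.sub_const (inner ℝ (Dψ a) a)
  exact (hψ.hasFDerivAt.sub_const (ψ a)).sub hlin

theorem breg_three_point (a b u : E) :
    breg ψ Dψ u a - breg ψ Dψ u b - breg ψ Dψ b a = inner ℝ (Dψ b - Dψ a) (u - b) := by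
  simp only [breg]
  rw [show u - a = (u - b) + (b - a) by abel, inner_add_right, inner_sub_left]
  ring

theorem mul_sub_le_breg_of_isMinOn [CompleteSpace E] {V : Set E} {ℓ : E → ℝ} {η : ℝ} {a b u : E}
    (hψ : HasGradientAt ψ (Dψ b) b) (hℓ : ConvexOn ℝ V ℓ) (hη : 0 ≤ η)
    (hmin : IsMinOn (fun y => breg ψ Dψ y a + η * ℓ y) V b) (hb : b ∈ V) (hu : u ∈ V) :
    η * (ℓ b - ℓ u) ≤ breg ψ Dψ u a - breg ψ Dψ u b - breg ψ Dψ b a := by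
  have h := IsMinOn.sub_le_fderiv_of_add_convexOn (f := fun y => breg ψ Dψ y a)
    (g := fun y => η * ℓ y) hmin (hasGradientAt_breg_left hψ).hasFDerivAt (hℓ.smul hη) hb hu
  rw [toDual_apply_apply, ← breg_three_point] at h
  linarith

end Bregman

theorem iomd_master_lemma_general {d : ℕ}
    (V : Set (EuclideanSpace ℝ (Fin d)))
    (hVcv : Convex ℝ V)
    (ψ : EuclideanSpace ℝ (Fin d) → ℝ)
    (Dψ : EuclideanSpace ℝ (Fin d) → EuclideanSpace ℝ (Fin d))
    (hgrad : ∀ x, HasGradientAt ψ (Dψ x) x)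
    (T : ℕ)
    (ℓ : ℕ → EuclideanSpace ℝ (Fin d) → ℝ)
    (η : ℕ → ℝ)
    (x : ℕ → EuclideanSpace ℝ (Fin d))
    (hconv : ∀ t ∈ Icc 1 T, ConvexOn ℝ Set.univ (ℓ t))
    (hη : ∀ t ∈ Icc 1 T, 0 < η t)
    (hmem : ∀ t ∈ Icc 1 T, x (t + 1) ∈ V)
    (hmin : ∀ t ∈ Icc 1 T, ∀ y ∈ V,
      breg ψ Dψ (x (t + 1)) (x t) + η t * ℓ t (x (t + 1)) ≤ breg ψ Dψ y (x t) + η t * ℓ t y) :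
    ∀ u ∈ V,
      ∑ t ∈ Icc 1 T, (ℓ t (x (t + 1)) - ℓ t u) ≤
        ∑ t ∈ Icc 1 T, (breg ψ Dψ u (x t) - breg ψ Dψ u (x (t + 1))) / η t -
          ∑ t ∈ Icc 1 T, breg ψ Dψ (x (t + 1)) (x t) / η t := by
  intro u hu
  rw [← sum_sub_distrib]
  refine sum_le_sum fun t ht => ?_
  have hstep := mul_sub_le_breg_of_isMinOn (hgrad _) ((hconv t ht).subset (Set.subset_univ V) hVcv)
    (hη t ht).le (isMinOn_iff.mpr (hmin t ht)) (hmem t ht) hu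
  rw [← sub_div, le_div_iff₀ (hη t ht)]
  linarith

/-- Master lemma for Implicit OMD: the cumulative post-update losses satisfy
`∑ₜ [ℓ_t(x_{t+1}) − ℓ_t(u)] ≤ ∑ₜ [B(u,x_t) − B(u,x_{t+1})]/η_t − ∑ₜ B(x_{t+1},x_t)/η_t`. -/
theorem iomd_master_lemma {d : ℕ}
    (V : Set (EuclideanSpace ℝ (Fin d)))
    (hVne : V.Nonempty) (hVcl : IsClosed V) (hVcv : Convex ℝ V)
    (ψ : EuclideanSpace ℝ (Fin d) → ℝ)
    (Dψ : EuclideanSpace ℝ (Fin d) → EuclideanSpace ℝ (Fin d))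
    (hψ : StrictConvexOn ℝ Set.univ ψ)
    (hgrad : ∀ x, HasGradientAt ψ (Dψ x) x)
    (T : ℕ)
    (ℓ : ℕ → EuclideanSpace ℝ (Fin d) → ℝ)
    (η : ℕ → ℝ)
    (x : ℕ → EuclideanSpace ℝ (Fin d))
    (hx1 : x 1 ∈ V)
    (hconv : ∀ t ∈ Icc 1 T, ConvexOn ℝ Set.univ (ℓ t))
    (hη : ∀ t ∈ Icc 1 T, 0 < η t)
    (hmem : ∀ t ∈ Icc 1 T, x (t + 1) ∈ V)
    (hmin : ∀ t ∈ Icc 1 T, ∀ y ∈ V,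
      breg ψ Dψ (x (t + 1)) (x t) + η t * ℓ t (x (t + 1)) ≤ breg ψ Dψ y (x t) + η t * ℓ t y) :
    ∀ u ∈ V,
      ∑ t ∈ Icc 1 T, (ℓ t (x (t + 1)) - ℓ t u) ≤
        ∑ t ∈ Icc 1 T, (breg ψ Dψ u (x t) - breg ψ Dψ u (x (t + 1))) / η t -
          ∑ t ∈ Icc 1 T, breg ψ Dψ (x (t + 1)) (x t) / η t :=
  iomd_master_lemma_general V hVcv ψ Dψ hgrad T ℓ η x hconv hη hmem hmin
end

section
/- Let ψ be 1-strongly convex w.r.t. ‖·‖, V nonempty closed convex, ℓ convex, η > 0, and x⁺ = argmin_{x ∈ V} B_ψ(x, x_t) + η·ℓ(x). Then for any g ∈ ∂ℓ(x_t): ℓ(x_t) − ℓ(x⁺) − B_ψ(x⁺, x_t)/η ≤ η·‖g‖_⋆²/2. -/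
/-- The subdifferential of a function at a point. -/
def subgrad {E : Type*} [NormedAddCommGroup E] [InnerProductSpace ℝ E]
    (f : E → ℝ) (x : E) : Set E :=
  {g | ∀ z, f x + (inner ℝ g (z - x) : ℝ) ≤ f z}

theorem mul_sub_sq_div_le {η : ℝ} (hη : 0 < η) (a b : ℝ) :
    a * b - b ^ 2 / (2 * η) ≤ η * a ^ 2 / 2 := by
  have hsq : a * b - b ^ 2 / (2 * η) + (η * a - b) ^ 2 / (2 * η) = η * a ^ 2 / 2 := by
    field_simp
    ring
  have : 0 ≤ (η * a - b) ^ 2 / (2 * η) := by positivity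
  linarith

section InnerProductSpace

variable {E : Type*} [NormedAddCommGroup E] [InnerProductSpace ℝ E]

theorem sub_le_inner_of_mem_subgrad {f : E → ℝ} {x g : E} (hg : g ∈ subgrad f x) (y : E) :
    f x - f y ≤ inner ℝ g (x - y) := by
  have hy := hg y
  rw [← neg_sub, inner_neg_right] at hy
  linarith

theorem half_sq_le_breg {ψ : E → ℝ} {Dψ : E → E} {n : E → ℝ} {a b : E}
    (hsc : ψ b + inner ℝ (Dψ b) (a - b) + 1 / 2 * n (a - b) ^ 2 ≤ ψ a) :
    1 / 2 * n (a - b) ^ 2 ≤ breg ψ Dψ a b := by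
  unfold breg
  linarith

theorem apply_sub_comm_of_abs_smul {n : E → ℝ} (hnhom : ∀ (r : ℝ) v, n (r • v) = |r| * n v)
    (a b : E) : n (a - b) = n (b - a) := by
  simpa using hnhom (-1) (b - a)

end InnerProductSpace

theorem implicit_per_round_bound_general {d : ℕ}
    (V : Set (EuclideanSpace ℝ (Fin d)))
    (ℓ ψ : EuclideanSpace ℝ (Fin d) → ℝ)
    (Dψ : EuclideanSpace ℝ (Fin d) → EuclideanSpace ℝ (Fin d))
    (n ns : EuclideanSpace ℝ (Fin d) → ℝ)
    -- `n` is a norm: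
    (hnhom : ∀ (r : ℝ) v, n (r • v) = |r| * n v)
    -- `ns` is the dual norm of `n` (generalized Cauchy–Schwarz):
    (hdual : ∀ g v, (inner ℝ g v : ℝ) ≤ ns g * n v)
    -- `ψ` is 1-strongly convex w.r.t. `n` on `V`:
    (hsc : ∀ a ∈ V, ∀ b ∈ V,
      ψ b + (inner ℝ (Dψ b) (a - b) : ℝ) + 1 / 2 * (n (a - b)) ^ 2 ≤ ψ a)
    (η : ℝ) (hη : 0 < η)
    (xt xplus : EuclideanSpace ℝ (Fin d))
    (hxt : xt ∈ V) (hxplus : xplus ∈ V) :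
    ∀ g ∈ subgrad ℓ xt,
      ℓ xt - ℓ xplus - breg ψ Dψ xplus xt / η ≤ η * (ns g) ^ 2 / 2 := by
  intro g hg
  have hloss : ℓ xt - ℓ xplus ≤ ns g * n (xplus - xt) := by
    rw [apply_sub_comm_of_abs_smul hnhom]
    exact (sub_le_inner_of_mem_subgrad hg xplus).trans (hdual g _)
  have hbreg : n (xplus - xt) ^ 2 / (2 * η) ≤ breg ψ Dψ xplus xt / η := by
    calc n (xplus - xt) ^ 2 / (2 * η) = 1 / 2 * n (xplus - xt) ^ 2 / η := by ring
      _ ≤ breg ψ Dψ xplus xt / η := by gcongr; exact half_sq_le_breg (hsc xplus hxplus xt hxt)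
  calc ℓ xt - ℓ xplus - breg ψ Dψ xplus xt / η
      ≤ ns g * n (xplus - xt) - n (xplus - xt) ^ 2 / (2 * η) := by linarith
    _ ≤ η * ns g ^ 2 / 2 := mul_sub_sq_div_le hη _ _

/-- Per-round bound for the implicit update with a `1`-strongly convex regularizer `ψ`
(w.r.t. a norm `n` with dual norm `ns`): for any `g ∈ ∂ℓ(x_t)`,
`ℓ(x_t) − ℓ(x⁺) − B_ψ(x⁺, x_t)/η ≤ η‖g‖⋆²/2`. -/
theorem implicit_per_round_bound {d : ℕ}
    (V : Set (EuclideanSpace ℝ (Fin d)))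
    (hVne : V.Nonempty) (hVcl : IsClosed V) (hVcv : Convex ℝ V)
    (ℓ ψ : EuclideanSpace ℝ (Fin d) → ℝ)
    (Dψ : EuclideanSpace ℝ (Fin d) → EuclideanSpace ℝ (Fin d))
    (n ns : EuclideanSpace ℝ (Fin d) → ℝ)
    -- `n` is a norm:
    (hn0 : ∀ v, 0 ≤ n v)
    (hntri : ∀ v w, n (v + w) ≤ n v + n w)
    (hnhom : ∀ (r : ℝ) v, n (r • v) = |r| * n v)
    -- `ns` is the dual norm of `n` (generalized Cauchy–Schwarz):
    (hdual : ∀ g v, (inner ℝ g v : ℝ) ≤ ns g * n v)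
    (hℓ : ConvexOn ℝ Set.univ ℓ)
    (hgrad : ∀ x, HasGradientAt ψ (Dψ x) x)
    -- `ψ` is 1-strongly convex w.r.t. `n` on `V`:
    (hsc : ∀ a ∈ V, ∀ b ∈ V,
      ψ b + (inner ℝ (Dψ b) (a - b) : ℝ) + 1 / 2 * (n (a - b)) ^ 2 ≤ ψ a)
    (η : ℝ) (hη : 0 < η)
    (xt xplus : EuclideanSpace ℝ (Fin d))
    (hxt : xt ∈ V) (hxplus : xplus ∈ V)
    (hmin : ∀ x ∈ V, breg ψ Dψ xplus xt + η * ℓ xplus ≤ breg ψ Dψ x xt + η * ℓ x) :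
    ∀ g ∈ subgrad ℓ xt,
      ℓ xt - ℓ xplus - breg ψ Dψ xplus xt / η ≤ η * (ns g) ^ 2 / 2 :=
  implicit_per_round_bound_general V ℓ ψ Dψ n ns hnhom hdual hsc η hη xt xplus hxt hxplus
end

section
/- Consider Implicit OMD with constant learning rate η_t = η for all t. Then for every u ∈ V: R_T(u) ≤ B_ψ(u, x₁)/η + ℓ₁(x₁) − ℓ_T(x_{T+1}) + V_T, where V_T = ∑_{t=2}^T max_{x ∈ V}(ℓ_t(x) − ℓ_{t−1}(x)) is the temporal variability. -/
open Finset

/-!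
Write `x_{t+1}` as the minimiser of `y ↦ B_ψ(y, x_t) + η ℓ_t(y)` over `V`. Comparing it with the
points of the segment towards `u` and letting them tend to `x_{t+1}` (first-order optimality, with
the convexity of `ℓ_t` bounding its values on the segment by the chord) gives, via the three-point
identity for Bregman divergences,
`η (ℓ_t(x_{t+1}) - ℓ_t(u)) ≤ B_ψ(u, x_t) - B_ψ(u, x_{t+1}) - B_ψ(x_{t+1}, x_t)`.
Summing, the Bregman terms telescope, and `ℓ_t(x_t) - ℓ_t(x_{t+1})` summed over `t` regroups as
`ℓ_1(x_1) - ℓ_T(x_{T+1}) + ∑_{t ≥ 2} (ℓ_t(x_t) - ℓ_{t-1}(x_t))`, each term of which is at most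
the maximum of `ℓ_t - ℓ_{t-1}` on `V`.
-/

open scoped RealInnerProductSpace

theorem HasDerivAt.nonneg_of_isMinOn_Icc {φ : ℝ → ℝ} {φ' : ℝ} (hφ : HasDerivAt φ φ' 0)
    (hmin : IsMinOn φ (Set.Icc 0 1) 0) : 0 ≤ φ' := by
  have hcone : (1 : ℝ) ∈ posTangentConeAt (Set.Icc 0 1) 0 :=
    mem_posTangentConeAt_of_segment_subset (by simp [segment_eq_Icc])
  simpa using hmin.localize.hasFDerivWithinAt_nonneg hφ.hasFDerivAt.hasFDerivWithinAt hcone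

section Bregman

variable {E : Type*} [NormedAddCommGroup E] [InnerProductSpace ℝ E]

theorem breg_sub_breg_sub_breg (ψ : E → ℝ) (Dψ : E → E) (u z p : E) :
    breg ψ Dψ u p - breg ψ Dψ u z - breg ψ Dψ z p = ⟪Dψ z - Dψ p, u - z⟫ := by
  have hsplit : u - p = (u - z) + (z - p) := by abel
  simp only [breg, hsplit, inner_add_right, inner_sub_left]
  ring

variable [CompleteSpace E] {ψ : E → ℝ} {Dψ : E → E}

theorem HasGradientAt.hasDerivAt_add_smul {g z : E} (h : HasGradientAt ψ g z) (v : E) :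
    HasDerivAt (fun t : ℝ => ψ (z + t • v)) ⟪g, v⟫ 0 := by
  have hline : HasDerivAt (fun t : ℝ => z + t • v) v 0 := by
    simpa using ((hasDerivAt_id (0 : ℝ)).smul_const v).const_add z
  have hcomp := h.hasFDerivAt.comp_hasDerivAt_of_eq 0 hline (by simp)
  simpa only [Function.comp_def, InnerProductSpace.toDual_apply_apply] using hcomp

theorem breg_nonneg (hψ : ConvexOn ℝ Set.univ ψ) {a b : E} (hb : HasGradientAt ψ (Dψ b) b) :
    0 ≤ breg ψ Dψ a b := by
  -- the gap between the chord and `ψ` on `[b, a]` vanishes at `b`, with derivative `breg a b` there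
  refine HasDerivAt.nonneg_of_isMinOn_Icc
    (φ := fun t => ψ b + t * (ψ a - ψ b) - ψ (b + t • (a - b))) ?_ (isMinOn_iff.2 fun t ht => ?_)
  · simpa [breg] using (((hasDerivAt_id 0).mul_const (ψ a - ψ b)).const_add (ψ b)).fun_sub
      (hb.hasDerivAt_add_smul (a - b))
  · have hconv := hψ.2 (Set.mem_univ b) (Set.mem_univ a) (sub_nonneg.2 ht.2) ht.1 (by ring)
    have hcomb : (1 - t) • b + t • a = b + t • (a - b) := by
      rw [sub_smul, smul_sub, one_smul]; abel
    rw [hcomb, smul_eq_mul, smul_eq_mul] at hconv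
    simp only [zero_mul, add_zero, zero_smul, sub_self]
    linarith

theorem mul_sub_le_inner_of_isMinOn_breg_add {V : Set E} (hV : Convex ℝ V) {ℓ : E → ℝ}
    (hℓ : ConvexOn ℝ V ℓ) {η : ℝ} (hη : 0 ≤ η) {p z u : E} (hz : z ∈ V) (hu : u ∈ V)
    (hgz : HasGradientAt ψ (Dψ z) z) (hmin : IsMinOn (fun y => breg ψ Dψ y p + η * ℓ y) V z) :
    η * (ℓ z - ℓ u) ≤ ⟪Dψ z - Dψ p, u - z⟫ := by
  set c := ⟪Dψ p, u - z⟫ + η * (ℓ z - ℓ u)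
  suffices 0 ≤ ⟪Dψ z, u - z⟫ - c by rw [inner_sub_left]; linarith
  refine HasDerivAt.nonneg_of_isMinOn_Icc (φ := fun t => ψ (z + t • (u - z)) - t * c)
    ((hgz.hasDerivAt_add_smul (u - z)).fun_sub (by simpa using (hasDerivAt_id 0).mul_const c))
    (isMinOn_iff.2 fun t ht => ?_)
  have hzt : z + t • (u - z) ∈ V := hV.add_smul_sub_mem hz hu ht
  have hcomb : (1 - t) • z + t • u = z + t • (u - z) := by
    rw [sub_smul, smul_sub, one_smul]; abel
  have hchord : ℓ (z + t • (u - z)) ≤ (1 - t) * ℓ z + t * ℓ u := by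
    simpa only [hcomb, smul_eq_mul] using hℓ.2 hz hu (sub_nonneg.2 ht.2) ht.1 (by ring)
  have hopt := isMinOn_iff.1 hmin _ hzt
  have hshift : z + t • (u - z) - p = (z - p) + t • (u - z) := by abel
  simp only [breg, hshift, inner_add_right, inner_smul_right] at hopt
  simp only [zero_mul, sub_zero, zero_smul, add_zero]
  linarith [mul_le_mul_of_nonneg_left hchord hη]

theorem mul_sub_le_breg_sub_breg_of_isMinOn {V : Set E} (hV : Convex ℝ V) {ℓ : E → ℝ}
    (hℓ : ConvexOn ℝ V ℓ) {η : ℝ} (hη : 0 ≤ η) (hψ : ConvexOn ℝ Set.univ ψ) {p z u : E}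
    (hgp : HasGradientAt ψ (Dψ p) p) (hgz : HasGradientAt ψ (Dψ z) z) (hz : z ∈ V) (hu : u ∈ V)
    (hmin : IsMinOn (fun y => breg ψ Dψ y p + η * ℓ y) V z) :
    η * (ℓ z - ℓ u) ≤ breg ψ Dψ u p - breg ψ Dψ u z := by
  have h := mul_sub_le_inner_of_isMinOn_breg_add hV hℓ hη hz hu hgz hmin
  rw [← breg_sub_breg_sub_breg] at h
  linarith [breg_nonneg (a := z) hψ hgp]

end Bregman

theorem Finset.sum_Icc_diag_sub_succ {M : Type*} [AddCommGroup M] (g : ℕ → ℕ → M) {T : ℕ}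
    (hT : 1 ≤ T) :
    ∑ t ∈ Icc 1 T, (g t t - g t (t + 1)) =
      g 1 1 - g T (T + 1) + ∑ t ∈ Icc 2 T, (g t t - g (t - 1) t) := by
  induction T, hT using Nat.le_induction with
  | base => simp
  | succ T hT ih =>
    rw [sum_Icc_succ_top (by omega), sum_Icc_succ_top (by omega), ih, Nat.add_sub_cancel]
    abel

theorem sum_Icc_sub_le_of_step_le {g : ℕ → ℕ → ℝ} {a b M : ℕ → ℝ} {η : ℝ} (hη : 0 < η)
    {T : ℕ} (hT : 1 ≤ T) (hstep : ∀ t ∈ Icc 1 T, η * (g t (t + 1) - a t) ≤ b t - b (t + 1))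
    (hvar : ∀ t ∈ Icc 2 T, g t t - g (t - 1) t ≤ M t) (hb : 0 ≤ b (T + 1)) :
    ∑ t ∈ Icc 1 T, (g t t - a t) ≤ b 1 / η + g 1 1 - g T (T + 1) + ∑ t ∈ Icc 2 T, M t := by
  have hstep' : ∀ t ∈ Icc 1 T, g t (t + 1) - a t ≤ (b t - b (t + 1)) / η := fun t ht => by
    rw [le_div_iff₀ hη, mul_comm]; exact hstep t ht
  have htele : ∑ t ∈ Icc 1 T, (b t - b (t + 1)) = b 1 - b (T + 1) := by
    simpa only [sub_neg_eq_add, neg_add_eq_sub] using sum_Icc_sub hT (fun t => -b t)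
  calc ∑ t ∈ Icc 1 T, (g t t - a t)
      = ∑ t ∈ Icc 1 T, (g t t - g t (t + 1)) + ∑ t ∈ Icc 1 T, (g t (t + 1) - a t) := by
        rw [← sum_add_distrib]; simp
    _ = g 1 1 - g T (T + 1) + ∑ t ∈ Icc 2 T, (g t t - g (t - 1) t)
          + ∑ t ∈ Icc 1 T, (g t (t + 1) - a t) := by
        rw [sum_Icc_diag_sub_succ g hT]
    _ ≤ g 1 1 - g T (T + 1) + ∑ t ∈ Icc 2 T, M t + ∑ t ∈ Icc 1 T, (b t - b (t + 1)) / η := by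
        gcongr with t ht t ht
        exacts [hvar t ht, hstep' t ht]
    _ ≤ b 1 / η + g 1 1 - g T (T + 1) + ∑ t ∈ Icc 2 T, M t := by
        rw [← sum_div, htele, sub_div]
        linarith [div_nonneg hb hη.le]

theorem iomd_constant_rate_temporal_variability_general {d : ℕ}
    (V : Set (EuclideanSpace ℝ (Fin d)))
    (hVcv : Convex ℝ V)
    (ψ : EuclideanSpace ℝ (Fin d) → ℝ)
    (Dψ : EuclideanSpace ℝ (Fin d) → EuclideanSpace ℝ (Fin d))
    (hψ : StrictConvexOn ℝ Set.univ ψ)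
    (hgrad : ∀ x, HasGradientAt ψ (Dψ x) x)
    (T : ℕ) (hT : 1 ≤ T)
    (ℓ : ℕ → EuclideanSpace ℝ (Fin d) → ℝ)
    (η : ℝ) (hη : 0 < η)
    (x : ℕ → EuclideanSpace ℝ (Fin d))
    (hconv : ∀ t ∈ Icc 1 T, ConvexOn ℝ Set.univ (ℓ t))
    (hmem : ∀ t ∈ Icc 1 T, x (t + 1) ∈ V)
    (hmin : ∀ t ∈ Icc 1 T, ∀ y ∈ V,
      breg ψ Dψ (x (t + 1)) (x t) + η * ℓ t (x (t + 1)) ≤ breg ψ Dψ y (x t) + η * ℓ t y)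
    -- `M t` is the attained maximum of `ℓ_t − ℓ_{t−1}` over `V`:
    (M : ℕ → ℝ)
    (hM : ∀ t ∈ Icc 2 T, IsGreatest ((fun y => ℓ t y - ℓ (t - 1) y) '' V) (M t)) :
    ∀ u ∈ V,
      ∑ t ∈ Icc 1 T, (ℓ t (x t) - ℓ t u) ≤
        breg ψ Dψ u (x 1) / η + ℓ 1 (x 1) - ℓ T (x (T + 1)) + ∑ t ∈ Icc 2 T, M t := by
  intro u hu
  have hxV (t : ℕ) (ht : t ∈ Icc 2 T) : x t ∈ V := by
    obtain ⟨h2t, htT⟩ := mem_Icc.1 ht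
    simpa [Nat.sub_add_cancel (by omega : 1 ≤ t)] using
      hmem (t - 1) (mem_Icc.2 ⟨by omega, by omega⟩)
  refine sum_Icc_sub_le_of_step_le (g := fun t s => ℓ t (x s))
    (b := fun t => breg ψ Dψ u (x t)) hη hT (fun t ht => ?_)
    (fun t ht => (hM t ht).2 ⟨x t, hxV t ht, rfl⟩) (breg_nonneg hψ.convexOn (hgrad _))
  exact mul_sub_le_breg_sub_breg_of_isMinOn hVcv
    ((hconv t ht).subset (Set.subset_univ V) hVcv) hη.le hψ.convexOn (hgrad _) (hgrad _)
    (hmem t ht) hu (isMinOn_iff.2 (hmin t ht))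

/-- Implicit OMD with constant learning rate `η`:
`R_T(u) ≤ B_ψ(u, x₁)/η + ℓ₁(x₁) − ℓ_T(x_{T+1}) + V_T`, where
`V_T = ∑_{t=2}^T max_{x ∈ V}(ℓ_t(x) − ℓ_{t−1}(x))`. -/
theorem iomd_constant_rate_temporal_variability {d : ℕ}
    (V : Set (EuclideanSpace ℝ (Fin d)))
    (hVne : V.Nonempty) (hVcl : IsClosed V) (hVcv : Convex ℝ V)
    (ψ : EuclideanSpace ℝ (Fin d) → ℝ)
    (Dψ : EuclideanSpace ℝ (Fin d) → EuclideanSpace ℝ (Fin d))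
    (hψ : StrictConvexOn ℝ Set.univ ψ)
    (hgrad : ∀ x, HasGradientAt ψ (Dψ x) x)
    (T : ℕ) (hT : 1 ≤ T)
    (ℓ : ℕ → EuclideanSpace ℝ (Fin d) → ℝ)
    (η : ℝ) (hη : 0 < η)
    (x : ℕ → EuclideanSpace ℝ (Fin d))
    (hx1 : x 1 ∈ V)
    (hconv : ∀ t ∈ Icc 1 T, ConvexOn ℝ Set.univ (ℓ t))
    (hmem : ∀ t ∈ Icc 1 T, x (t + 1) ∈ V)
    (hmin : ∀ t ∈ Icc 1 T, ∀ y ∈ V,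
      breg ψ Dψ (x (t + 1)) (x t) + η * ℓ t (x (t + 1)) ≤ breg ψ Dψ y (x t) + η * ℓ t y)
    -- `M t` is the attained maximum of `ℓ_t − ℓ_{t−1}` over `V`:
    (M : ℕ → ℝ)
    (hM : ∀ t ∈ Icc 2 T, IsGreatest ((fun y => ℓ t y - ℓ (t - 1) y) '' V) (M t)) :
    ∀ u ∈ V,
      ∑ t ∈ Icc 1 T, (ℓ t (x t) - ℓ t u) ≤
        breg ψ Dψ u (x 1) / η + ℓ 1 (x 1) - ℓ T (x (T + 1)) + ∑ t ∈ Icc 2 T, M t :=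
  iomd_constant_rate_temporal_variability_general V hVcv ψ Dψ hψ hgrad T hT ℓ η hη x hconv hmem hmin
    M hM
end

section
/- Let {a_t} be a sequence of non-negative reals and {Δ_t} a sequence of non-negative reals with Δ₁ = 0 and Δ_{t+1} ≤ Δ_t + min{b·a_t, c·a_t²/(2Δ_t)} for all t ≥ 1 (interpreting min{x, y/0} = x), where b, c ≥ 0. Then for all T ≥ 0: Δ_{T+1} ≤ √((b² + c)·∑_{t=1}^T a_t²). -/
open Finset

/-
Squaring the recurrence gives `Δ_{t+1}² ≤ Δ_t² + 2δ_tΔ_t + δ_t²`, where `δ_t` is the increment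
`min{b a_t, c a_t² / (2Δ_t)}`: the cross term is at most `c a_t²` and the square at most `b² a_t²`.
Telescoping from `Δ₁ = 0` bounds `Δ_{T+1}²` by `(b² + c) ∑_{t ≤ T} a_t²`.
-/

lemma sq_le_sq_add_of_le_add {D D' δ x b c : ℝ} (hD' : 0 ≤ D') (hδ : 0 ≤ δ)
    (hδb : δ ≤ b * x) (hδc : 2 * δ * D ≤ c * x ^ 2) (h : D' ≤ D + δ) :
    D' ^ 2 ≤ D ^ 2 + (b ^ 2 + c) * x ^ 2 :=
  calc D' ^ 2 ≤ (D + δ) ^ 2 := pow_le_pow_left₀ hD' h 2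
    _ = D ^ 2 + 2 * δ * D + δ ^ 2 := by ring
    _ ≤ D ^ 2 + c * x ^ 2 + (b * x) ^ 2 := by gcongr
    _ = D ^ 2 + (b ^ 2 + c) * x ^ 2 := by ring

section Increment

variable {D x b c : ℝ}

lemma ite_min_div_nonneg (hD : 0 ≤ D) (hx : 0 ≤ x) (hb : 0 ≤ b) (hc : 0 ≤ c) :
    0 ≤ if D = 0 then b * x else min (b * x) (c * x ^ 2 / (2 * D)) := by
  split_ifs
  · positivity
  · exact le_min (by positivity) (by positivity)

lemma ite_min_div_le_mul : (if D = 0 then b * x else min (b * x) (c * x ^ 2 / (2 * D))) ≤ b * x := by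
  split_ifs
  · exact le_rfl
  · exact min_le_left _ _

lemma two_mul_ite_min_div_mul_le (hD : 0 ≤ D) (hc : 0 ≤ c) :
    2 * (if D = 0 then b * x else min (b * x) (c * x ^ 2 / (2 * D))) * D ≤ c * x ^ 2 := by
  split_ifs with hD0
  · rw [hD0, mul_zero]
    positivity
  · have h2D : 0 < 2 * D := by positivity
    calc 2 * min (b * x) (c * x ^ 2 / (2 * D)) * D
        = min (b * x) (c * x ^ 2 / (2 * D)) * (2 * D) := by ring
      _ ≤ c * x ^ 2 / (2 * D) * (2 * D) := by gcongr; exact min_le_right _ _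
      _ = c * x ^ 2 := div_mul_cancel₀ _ h2D.ne'

end Increment

lemma le_add_sum_Icc_of_le_add {f g : ℕ → ℝ} (h : ∀ t, 1 ≤ t → f (t + 1) ≤ f t + g t) (T : ℕ) :
    f (T + 1) ≤ f 1 + ∑ t ∈ Icc 1 T, g t := by
  induction T with
  | zero => simp
  | succ n ih =>
    rw [sum_Icc_succ_top (Nat.le_add_left 1 n)]
    linarith [h (n + 1) (Nat.le_add_left 1 n)]

/-- AdaFTRL/AdaHedge-style recurrence lemma: if `Δ₁ = 0` and
`Δ_{t+1} ≤ Δ_t + min{b a_t, c a_t²/(2Δ_t)}` (interpreting `min{x, y/0} = x`),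
then `Δ_{T+1} ≤ √((b² + c) ∑_{t=1}^T a_t²)`. -/
theorem adahedge_recurrence (a Δ : ℕ → ℝ) (b c : ℝ)
    (hb : 0 ≤ b) (hc : 0 ≤ c)
    (ha : ∀ t, 0 ≤ a t)
    (hΔ0 : ∀ t, 0 ≤ Δ t)
    (hΔ1 : Δ 1 = 0)
    (hrec : ∀ t, 1 ≤ t →
      Δ (t + 1) ≤ Δ t +
        (if Δ t = 0 then b * a t else min (b * a t) (c * (a t) ^ 2 / (2 * Δ t)))) :
    ∀ T : ℕ, Δ (T + 1) ≤ Real.sqrt ((b ^ 2 + c) * ∑ t ∈ Icc 1 T, (a t) ^ 2) := by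
  have hstep : ∀ t, 1 ≤ t → Δ (t + 1) ^ 2 ≤ Δ t ^ 2 + (b ^ 2 + c) * a t ^ 2 := fun t ht =>
    sq_le_sq_add_of_le_add (hΔ0 _) (ite_min_div_nonneg (hΔ0 t) (ha t) hb hc)
      ite_min_div_le_mul (two_mul_ite_min_div_mul_le (hΔ0 t) hc) (hrec t ht)
  intro T
  rw [Real.le_sqrt (hΔ0 _) (by positivity), mul_sum]
  simpa [hΔ1] using le_add_sum_Icc_of_le_add (f := fun t => Δ t ^ 2) hstep T
end
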